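/- arXiv:2011.08248 — 3 statements merged into one kernel-verified Lean document; each statement's English description precedes it below -/
import Mathlib

section
/- Let b : ℝ → ℝ be differentiable on [0,∞) and let α : ℝ → ℝ be an extended class K function, i.e. strictly increasing with α(0) = 0. If b(0) ≥ 0 and for every t ≥ 0 the derivative satisfies b'(t) + α(b(t)) ≥ 0, then b(t) ≥ 0 for all t ≥ 0. -/
/-!
If `b` became negative at some time `T`, let `t₀` be the last time in `[0, T]` at which `b ≥ 0`.
On `(t₀, T]` we have `b < 0`, hence `α ∘ b < 0` and `b' > 0`; so `b` increases on `[t₀, T]` and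
`b T > b t₀ ≥ 0`, a contradiction.
-/

open Set

theorem ContinuousOn.nonneg_of_deriv_pos_of_neg {f : ℝ → ℝ} {a c : ℝ} (hac : a ≤ c)
    (hf : ContinuousOn f (Icc a c)) (hfa : 0 ≤ f a)
    (hderiv : ∀ t ∈ Ioo a c, f t < 0 → 0 < deriv f t) : 0 ≤ f c := by
  by_contra! hfc
  have hclosed : IsClosed (Icc a c ∩ f ⁻¹' Ici 0) :=
    hf.preimage_isClosed_of_isClosed isClosed_Icc isClosed_Ici
  obtain ⟨t₀, ⟨⟨hat₀, ht₀c⟩, hft₀⟩, hlast⟩ :=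
    (isCompact_Icc.of_isClosed_subset hclosed inter_subset_left).exists_isGreatest
      ⟨a, ⟨left_mem_Icc.2 hac, hfa⟩⟩
  have hneg : ∀ t ∈ Ioc t₀ c, f t < 0 := fun t ht =>
    not_le.1 fun h => (hlast ⟨⟨hat₀.trans ht.1.le, ht.2⟩, h⟩).not_gt ht.1
  have ht₀c' : t₀ < c := ht₀c.lt_of_ne (by rintro rfl; exact hft₀.not_gt hfc)
  have hmono : StrictMonoOn f (Icc t₀ c) := by
    refine strictMonoOn_of_deriv_pos (convex_Icc _ _) (hf.mono (Icc_subset_Icc_left hat₀)) ?_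
    rw [interior_Icc]
    exact fun t ht => hderiv t ⟨hat₀.trans_lt ht.1, ht.2⟩ (hneg t (Ioo_subset_Ioc_self ht))
  exact ((hmono (left_mem_Icc.2 ht₀c) (right_mem_Icc.2 ht₀c) ht₀c').trans hfc).not_ge hft₀

/-- Scalar (relative degree one) CBF forward-invariance theorem along a trajectory:
if `b` is differentiable on `[0, ∞)`, `α` is an extended class K function
(strictly increasing with `α 0 = 0`), `b 0 ≥ 0`, and the differential inequality
`b'(t) + α (b t) ≥ 0` holds for all `t ≥ 0`, then `b t ≥ 0` for all `t ≥ 0`. -/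
theorem cbf_forward_invariance_relative_degree_one
    (b α : ℝ → ℝ)
    (hα_mono : StrictMono α) (hα0 : α 0 = 0)
    (hb_diff : ∀ t : ℝ, 0 ≤ t → DifferentiableAt ℝ b t)
    (hb0 : 0 ≤ b 0)
    (hineq : ∀ t : ℝ, 0 ≤ t → deriv b t + α (b t) ≥ 0) :
    ∀ t : ℝ, 0 ≤ t → 0 ≤ b t := by
  intro T hT
  refine ContinuousOn.nonneg_of_deriv_pos_of_neg hT
    (fun t ht => (hb_diff t ht.1).continuousAt.continuousWithinAt) hb0 fun t ht hbt => ?_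
  have hαbt : α (b t) < 0 := hα0 ▸ hα_mono hbt
  linarith [hineq t ht.1.le]
end

section
/- Let m ≥ 1 and let ψ₀, ψ₁, …, ψ_m : ℝ → ℝ be functions such that for each i ∈ {0, …, m−1}, ψ_i is differentiable on [0,∞) and ψ_{i+1}(t) = ψ_i'(t) + α_{i+1}(ψ_i(t)) for all t ≥ 0, where each α_{i+1} : ℝ → ℝ is an extended class K function (strictly increasing with α_{i+1}(0) = 0). If ψ_i(0) ≥ 0 for all i ∈ {0, …, m−1} and ψ_m(t) ≥ 0 for all t ≥ 0, then ψ_i(t) ≥ 0 for all t ≥ 0 and all i ∈ {0, …, m−1}. -/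
/-! If `ψ i` ever became negative, then on the stretch after its last nonnegative point
`ψ i' = ψ (i+1) - α (i+1) (ψ i) ≥ -α (i+1) (ψ i) ≥ 0`, so `ψ i` would be nondecreasing there and
could not have dropped below zero. Running this comparison argument downwards from `ψ m ≥ 0`
gives the claim for every `i < m`. -/

open Set

theorem nonneg_of_deriv_nonneg_of_neg {f : ℝ → ℝ} {a : ℝ}
    (hf : ∀ t ∈ Ici a, DifferentiableAt ℝ f t)
    (hderiv : ∀ t ∈ Ici a, f t < 0 → 0 ≤ deriv f t) (ha : 0 ≤ f a) :
    ∀ t ∈ Ici a, 0 ≤ f t := by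
  intro t (hat : a ≤ t)
  by_contra! hft
  have hcont : ContinuousOn f (Icc a t) := fun x hx =>
    (hf x hx.1).continuousAt.continuousWithinAt
  have hclosed : IsClosed (Icc a t ∩ f ⁻¹' Ici 0) :=
    hcont.preimage_isClosed_of_isClosed isClosed_Icc isClosed_Ici
  obtain ⟨s, ⟨⟨has, hst⟩, hfs⟩, hs_max⟩ :=
    (isCompact_Icc.of_isClosed_subset hclosed inter_subset_left).exists_isGreatest
      ⟨a, ⟨le_rfl, hat⟩, ha⟩
  have hneg : ∀ x ∈ Ioc s t, f x < 0 := fun x hx => by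
    by_contra! hfx
    exact hx.1.not_ge (hs_max ⟨⟨has.trans hx.1.le, hx.2⟩, hfx⟩)
  have hmono : MonotoneOn f (Icc s t) := by
    refine monotoneOn_of_deriv_nonneg (convex_Icc s t)
      (hcont.mono (Icc_subset_Icc has le_rfl)) (fun x hx => ?_) (fun x hx => ?_) <;>
      rw [interior_Icc] at hx
    · exact (hf x (has.trans hx.1.le)).differentiableWithinAt
    · exact hderiv x (has.trans hx.1.le) (hneg x (Ioo_subset_Ioc_self hx))
  exact hft.not_ge (le_trans hfs (hmono (left_mem_Icc.2 hst) (right_mem_Icc.2 hst) hst))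

theorem nonneg_of_deriv_add_comp_nonneg {f g : ℝ → ℝ} {a : ℝ}
    (hg : Monotone g) (hg0 : g 0 = 0)
    (hf : ∀ t ∈ Ici a, DifferentiableAt ℝ f t)
    (hineq : ∀ t ∈ Ici a, 0 ≤ deriv f t + g (f t)) (ha : 0 ≤ f a) :
    ∀ t ∈ Ici a, 0 ≤ f t :=
  nonneg_of_deriv_nonneg_of_neg hf (fun t ht hft => by
    linarith [hineq t ht, hg0 ▸ hg hft.le]) ha

theorem hocbf_forward_invariance_general
    (m : ℕ)
    (ψ : ℕ → ℝ → ℝ) (α : ℕ → ℝ → ℝ)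
    (hα_mono : ∀ i, 1 ≤ i → i ≤ m → StrictMono (α i))
    (hα0 : ∀ i, 1 ≤ i → i ≤ m → α i 0 = 0)
    (hdiff : ∀ i < m, ∀ t : ℝ, 0 ≤ t → DifferentiableAt ℝ (ψ i) t)
    (hrec : ∀ i < m, ∀ t : ℝ, 0 ≤ t →
      ψ (i + 1) t = deriv (ψ i) t + α (i + 1) (ψ i t))
    (hinit : ∀ i < m, 0 ≤ ψ i 0)
    (hm_nonneg : ∀ t : ℝ, 0 ≤ t → 0 ≤ ψ m t) :
    ∀ i < m, ∀ t : ℝ, 0 ≤ t → 0 ≤ ψ i t := by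
  have hall : ∀ i ≤ m, ∀ t : ℝ, 0 ≤ t → 0 ≤ ψ i t := fun i him => by
    induction him using Nat.decreasingInduction with
    | self => exact hm_nonneg
    | of_succ i hi hnext =>
      exact nonneg_of_deriv_add_comp_nonneg
        (hα_mono (i + 1) (Nat.le_add_left 1 i) hi).monotone
        (hα0 (i + 1) (Nat.le_add_left 1 i) hi)
        (hdiff i hi) (fun t ht => hrec i hi t ht ▸ hnext t ht) (hinit i hi)
  exact fun i hi => hall i hi.le

/-- Theorem 1 (HOCBF forward invariance) along a trajectory: given functions
`ψ 0, …, ψ m` with `ψ (i+1) t = (ψ i)'(t) + α (i+1) (ψ i t)` for `i < m`,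
where each `α (i+1)` is an extended class K function, if `ψ i 0 ≥ 0` for all
`i < m` and `ψ m t ≥ 0` for all `t ≥ 0`, then `ψ i t ≥ 0` for all `t ≥ 0`
and all `i < m`. -/
theorem hocbf_forward_invariance
    (m : ℕ) (hm : 1 ≤ m)
    (ψ : ℕ → ℝ → ℝ) (α : ℕ → ℝ → ℝ)
    (hα_mono : ∀ i, 1 ≤ i → i ≤ m → StrictMono (α i))
    (hα0 : ∀ i, 1 ≤ i → i ≤ m → α i 0 = 0)
    (hdiff : ∀ i < m, ∀ t : ℝ, 0 ≤ t → DifferentiableAt ℝ (ψ i) t)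
    (hrec : ∀ i < m, ∀ t : ℝ, 0 ≤ t →
      ψ (i + 1) t = deriv (ψ i) t + α (i + 1) (ψ i t))
    (hinit : ∀ i < m, 0 ≤ ψ i 0)
    (hm_nonneg : ∀ t : ℝ, 0 ≤ t → 0 ≤ ψ m t) :
    ∀ i < m, ∀ t : ℝ, 0 ≤ t → 0 ≤ ψ i t :=
  hocbf_forward_invariance_general m ψ α hα_mono hα0 hdiff hrec hinit hm_nonneg
end

section
/- Consider the control-affine system ẋ = f(x) + g(x)u on ℝⁿ with control u ∈ ℝ^q, where f : ℝⁿ → ℝⁿ and g(x) : ℝ^q → ℝⁿ is linear for each x. Let b : ℝⁿ → ℝ be differentiable, let α, α_f : ℝ → ℝ be extended class K functions (strictly increasing with value 0 at 0), let u_min ≤ u_max in ℝ^q (componentwise), and assume Db(y)[g(y)e_i] ≤ 0 for every y ∈ ℝⁿ and every standard basis vector e_i of ℝ^q. Define b_F(y) = Db(y)[f(y) + g(y)u_min] + α(b(y)). Let x : ℝ → ℝⁿ and u : ℝ → ℝ^q be such that x'(t) = f(x(t)) + g(x(t))u(t) for all t ≥ 0 and t ↦ b_F(x(t)) is differentiable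 with (d/dt) b_F(x(t)) + α_f(b_F(x(t))) ≥ 0 for all t ≥ 0 (the controller satisfies the CBF constraint enforcing the feasibility constraint). If b_F(x(0)) ≥ 0, then for every t ≥ 0 there exists u' ∈ ℝ^q with u_min ≤ u' ≤ u_max componentwise and Db(x(t))[f(x(t)) + g(x(t))u'] + α(b(x(t))) ≥ 0; that is, the CBF constraint for b and the control bounds are conflict-free along the whole trajectory. -/
/-!
With the witness `u' = u_min` the CBF constraint for `b` reads `b_F(x(t)) ≥ 0`, so it suffices that
`b_F` stays nonnegative along the trajectory. This is forward invariance of `{b_F ≥ 0}`: wherever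
`h = b_F ∘ x` is negative, `h' ≥ -α_f(h) > 0`, so `h` cannot pass from its last nonnegative value
to a negative one while increasing.
-/

open Set

theorem nonneg_of_deriv_pos_of_neg {h : ℝ → ℝ} {a t : ℝ} (hat : a ≤ t)
    (hcont : ContinuousOn h (Icc a t)) (hderiv : ∀ s ∈ Ioo a t, h s < 0 → 0 < deriv h s)
    (ha : 0 ≤ h a) : 0 ≤ h t := by
  by_contra! ht
  have hclosed : IsClosed (Icc a t ∩ h ⁻¹' Ici 0) :=
    hcont.preimage_isClosed_of_isClosed isClosed_Icc isClosed_Ici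
  obtain ⟨T, ⟨⟨haT, hTt⟩, hT : 0 ≤ h T⟩, hT_last⟩ :=
    (isCompact_Icc.of_isClosed_subset hclosed inter_subset_left).exists_isGreatest
      ⟨a, ⟨left_mem_Icc.2 hat, ha⟩⟩
  have hTt : T < t := hTt.lt_of_ne (by rintro rfl; exact hT.not_gt ht)
  have hneg : ∀ s ∈ Ioo T t, h s < 0 := fun s hs => by
    by_contra! hs0
    exact (hT_last ⟨⟨haT.trans hs.1.le, hs.2.le⟩, hs0⟩).not_gt hs.1
  have hmono : StrictMonoOn h (Icc T t) := by
    refine strictMonoOn_of_deriv_pos (convex_Icc T t) (hcont.mono (Icc_subset_Icc haT le_rfl)) ?_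
    rw [interior_Icc]
    exact fun s hs => hderiv s ⟨haT.trans_lt hs.1, hs.2⟩ (hneg s hs)
  have := hmono (left_mem_Icc.2 hTt.le) (right_mem_Icc.2 hTt.le) hTt
  linarith

theorem nonneg_of_deriv_add_classK_nonneg {h φ : ℝ → ℝ} (hφ_mono : StrictMono φ) (hφ0 : φ 0 = 0)
    (hdiff : ∀ t, 0 ≤ t → DifferentiableAt ℝ h t) (hcbf : ∀ t, 0 ≤ t → deriv h t + φ (h t) ≥ 0)
    (h0 : 0 ≤ h 0) {t : ℝ} (ht : 0 ≤ t) : 0 ≤ h t := by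
  refine nonneg_of_deriv_pos_of_neg ht (fun s hs => (hdiff s hs.1).continuousAt.continuousWithinAt)
    (fun s hs hneg => ?_) h0
  have hφ_neg : φ (h s) < 0 := hφ0 ▸ hφ_mono hneg
  linarith [hcbf s hs.1.le]

theorem feasibility_cbf_keeps_qp_feasible_relative_degree_one_general
    (n q : ℕ)
    (f : (Fin n → ℝ) → (Fin n → ℝ))
    (g : (Fin n → ℝ) → ((Fin q → ℝ) →ₗ[ℝ] (Fin n → ℝ)))
    (b : (Fin n → ℝ) → ℝ)
    (α αf : ℝ → ℝ)
    (hαf_mono : StrictMono αf) (hαf0 : αf 0 = 0)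
    (uMin uMax : Fin q → ℝ) (hbounds : ∀ i, uMin i ≤ uMax i)
    (bF : (Fin n → ℝ) → ℝ)
    (hbF_def : ∀ y : Fin n → ℝ,
      bF y = fderiv ℝ b y (f y + g y uMin) + α (b y))
    (x : ℝ → (Fin n → ℝ))
    (hbFx_diff : ∀ t : ℝ, 0 ≤ t → DifferentiableAt ℝ (fun s => bF (x s)) t)
    (hbFx_cbf : ∀ t : ℝ, 0 ≤ t →
      deriv (fun s => bF (x s)) t + αf (bF (x t)) ≥ 0)
    (hbF0 : 0 ≤ bF (x 0)) :
    ∀ t : ℝ, 0 ≤ t → ∃ u' : Fin q → ℝ,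
      (∀ i, uMin i ≤ u' i) ∧ (∀ i, u' i ≤ uMax i) ∧
      fderiv ℝ b (x t) (f (x t) + g (x t) u') + α (b (x t)) ≥ 0 := by
  intro t ht
  refine ⟨uMin, fun _ => le_rfl, hbounds, ?_⟩
  rw [← hbF_def]
  exact nonneg_of_deriv_add_classK_nonneg hαf_mono hαf0 hbFx_diff hbFx_cbf hbF0 ht

/-- Theorem 2 (relative-degree-one case): along a trajectory of the
control-affine system `ẋ = f(x) + g(x)u` on which a CBF constraint enforcing
the feasibility constraint `b_F(x) ≥ 0` is satisfied, and with
`b_F(x(0)) ≥ 0`, the CBF constraint for `b` and the control bounds are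
conflict-free along the whole trajectory. -/
theorem feasibility_cbf_keeps_qp_feasible_relative_degree_one
    (n q : ℕ)
    (f : (Fin n → ℝ) → (Fin n → ℝ))
    (g : (Fin n → ℝ) → ((Fin q → ℝ) →ₗ[ℝ] (Fin n → ℝ)))
    (b : (Fin n → ℝ) → ℝ) (hb : Differentiable ℝ b)
    (α αf : ℝ → ℝ)
    (hα_mono : StrictMono α) (hα0 : α 0 = 0)
    (hαf_mono : StrictMono αf) (hαf0 : αf 0 = 0)
    (uMin uMax : Fin q → ℝ) (hbounds : ∀ i, uMin i ≤ uMax i)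
    (hLg_nonpos : ∀ y : Fin n → ℝ, ∀ i : Fin q,
      fderiv ℝ b y (g y (Pi.single i 1)) ≤ 0)
    (bF : (Fin n → ℝ) → ℝ)
    (hbF_def : ∀ y : Fin n → ℝ,
      bF y = fderiv ℝ b y (f y + g y uMin) + α (b y))
    (x : ℝ → (Fin n → ℝ)) (u : ℝ → (Fin q → ℝ))
    (hx : ∀ t : ℝ, 0 ≤ t → HasDerivAt x (f (x t) + g (x t) (u t)) t)
    (hbFx_diff : ∀ t : ℝ, 0 ≤ t → DifferentiableAt ℝ (fun s => bF (x s)) t)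
    (hbFx_cbf : ∀ t : ℝ, 0 ≤ t →
      deriv (fun s => bF (x s)) t + αf (bF (x t)) ≥ 0)
    (hbF0 : 0 ≤ bF (x 0)) :
    ∀ t : ℝ, 0 ≤ t → ∃ u' : Fin q → ℝ,
      (∀ i, uMin i ≤ u' i) ∧ (∀ i, u' i ≤ uMax i) ∧
      fderiv ℝ b (x t) (f (x t) + g (x t) u') + α (b (x t)) ≥ 0 :=
  feasibility_cbf_keeps_qp_feasible_relative_degree_one_general n q f g b α αf hαf_mono hαf0 uMin
    uMax hbounds bF hbF_def x hbFx_diff hbFx_cbf hbF0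
end
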